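/- arXiv:2010.04539 — 7 statements merged into one kernel-verified Lean document; each statement's English description precedes it below -/
import Mathlib

section
/- Let G be a graph on n vertices and let 1 ≤ k ≤ n−1. If G is connected, then the k-token graph T_k(G) is connected. -/
/-- The `k`-token graph of `G`: vertices are the `k`-subsets of `V(G)`, two subsets
adjacent iff their symmetric difference is an edge of `G`. -/
def tokenGraph {V : Type*} [DecidableEq V] (G : SimpleGraph V) (k : ℕ) :
    SimpleGraph {s : Finset V // s.card = k} where
  Adj A B := ∃ a b, G.Adj a b ∧ symmDiff A.1 B.1 = {a, b}
  symm := by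
    constructor
    rintro A B ⟨a, b, hab, h⟩
    exact ⟨b, a, hab.symm, by rw [symmDiff_comm, h, Finset.pair_comm]⟩
  loopless := by
    constructor
    rintro A ⟨a, b, hab, h⟩
    rw [symmDiff_self] at h
    exact (Finset.insert_ne_empty a {b}) (by simpa using h.symm)

/-- A set of vertices is independent if no two of its members are adjacent. -/
def IndepSet {W : Type*} (G : SimpleGraph W) (s : Set W) : Prop :=
  s.Pairwise fun a b => ¬ G.Adj a b

/-- The independence number of a finite graph. -/
noncomputable def indepNum {W : Type*} [Fintype W] (G : SimpleGraph W) : ℕ := by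
  classical exact Finset.univ.sup fun s : Finset W => if IndepSet G ↑s then s.card else 0

/-- A graph is well-covered if all its maximal independent sets have the same cardinality. -/
def WellCovered {W : Type*} (G : SimpleGraph W) : Prop :=
  ∀ s t : Set W, Maximal (IndepSet G) s → Maximal (IndepSet G) t → s.ncard = t.ncard

/-!
A token on `u ∈ A` can be moved to any vertex `v ∉ A` along a walk `u = w₀, w₁, …, wₘ = v` of `G`
without disturbing the other tokens: if `w₁ ∉ A`, slide the token to `w₁` and recurse; if `w₁ ∈ A`,
first move the token sitting on `w₁` to `v` (recursively), then slide the token on `u` into the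
vacated `w₁`. Given two `k`-sets `A ≠ B`, moving a token from `A \ B` to `B \ A` shrinks `A \ B`,
so every `A` reaches `B`.
-/

open Finset SimpleGraph

namespace TokenGraph

variable {V : Type*} [DecidableEq V] {G : SimpleGraph V} {k : ℕ}

lemma card_insert_erase_of_mem_of_notMem {A : Finset V} {u v : V} (hu : u ∈ A) (hv : v ∉ A) :
    #(insert v (A.erase u)) = #A := by
  rw [card_insert_of_notMem fun h => hv (mem_of_mem_erase h), card_erase_add_one hu]

def exchange (A : {s : Finset V // #s = k}) {u v : V} (hu : u ∈ A.1) (hv : v ∉ A.1) :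
    {s : Finset V // #s = k} :=
  ⟨insert v (A.1.erase u), (card_insert_erase_of_mem_of_notMem hu hv).trans A.2⟩

@[simp]
lemma exchange_val (A : {s : Finset V // #s = k}) {u v : V} (hu : u ∈ A.1) (hv : v ∉ A.1) :
    (exchange A hu hv).1 = insert v (A.1.erase u) := rfl

lemma adj_exchange {A : {s : Finset V // #s = k}} {u v : V} (hu : u ∈ A.1) (hv : v ∉ A.1)
    (huv : G.Adj u v) : (tokenGraph G k).Adj A (exchange A hu hv) := by
  refine ⟨u, v, huv, ?_⟩
  ext x
  simp only [mem_symmDiff, exchange_val, mem_insert, mem_erase, mem_singleton]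
  grind

lemma reachable_exchange_of_walk {u v : V} (p : G.Walk u v) (A : {s : Finset V // #s = k})
    (hu : u ∈ A.1) (hv : v ∉ A.1) : (tokenGraph G k).Reachable A (exchange A hu hv) := by
  induction p generalizing A with
  | nil => exact absurd hu hv
  | @cons u w v huw q ih =>
    by_cases hw : w ∈ A.1
    · have hu' : u ∈ (exchange A hw hv).1 := by simp [huw.ne, hu]
      have hw' : w ∉ (exchange A hw hv).1 := by
        simp only [exchange_val, mem_insert, mem_erase]
        grind
      convert (ih A hw hv).trans (adj_exchange hu' hw' huw).reachable using 1
      ext x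
      simp only [exchange_val, mem_insert, mem_erase]
      grind
    · by_cases hwv : w = v
      · subst hwv
        exact (adj_exchange hu hv huw).reachable
      · have hw' : w ∈ (exchange A hu hw).1 := mem_insert_self _ _
        have hv' : v ∉ (exchange A hu hw).1 := by
          simp only [exchange_val, mem_insert, mem_erase]
          grind
        convert (adj_exchange hu hw huw).reachable.trans (ih _ hw' hv') using 1
        ext x
        simp only [exchange_val, mem_insert, mem_erase]
        grind

lemma reachable_of_card_sdiff_eq (hG : G.Preconnected) (n : ℕ) :
    ∀ A B : {s : Finset V // #s = k}, #(A.1 \ B.1) = n → (tokenGraph G k).Reachable A B := by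
  induction n with
  | zero =>
    intro A B h
    have hAB : A.1 ⊆ B.1 := sdiff_eq_empty_iff_subset.mp (card_eq_zero.mp h)
    rw [Subtype.ext (eq_of_subset_of_card_le hAB (by rw [A.2, B.2]))]
  | succ n ih =>
    intro A B h
    obtain ⟨a, ha⟩ : (A.1 \ B.1).Nonempty := by
      rw [← card_pos, h]
      exact n.succ_pos
    obtain ⟨b, hb⟩ : (B.1 \ A.1).Nonempty := by
      rw [← card_pos, card_sdiff_comm (B.2.trans A.2.symm), h]
      exact n.succ_pos
    rw [mem_sdiff] at ha hb
    obtain ⟨p⟩ := hG a b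
    refine (reachable_exchange_of_walk p A ha.1 hb.2).trans (ih _ B ?_)
    have : (exchange A ha.1 hb.2).1 \ B.1 = (A.1 \ B.1).erase a := by
      ext x
      simp only [exchange_val, mem_sdiff, mem_insert, mem_erase]
      grind
    rw [this, card_erase_of_mem (mem_sdiff.mpr ha), h, Nat.add_sub_cancel]

theorem preconnected_tokenGraph (hG : G.Preconnected) : (tokenGraph G k).Preconnected :=
  fun A B => reachable_of_card_sdiff_eq hG _ A B rfl

end TokenGraph

theorem stmt0_general {V : Type*} [Fintype V] [DecidableEq V] (G : SimpleGraph V) (k : ℕ)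
    (hk2 : k ≤ Fintype.card V - 1) (hG : G.Connected) :
    (tokenGraph G k).Connected := by
  have hV : 0 < Fintype.card V := Fintype.card_pos_iff.mpr hG.nonempty
  obtain ⟨s, hs⟩ : (powersetCard k (univ : Finset V)).Nonempty :=
    powersetCard_nonempty.mpr (by rw [card_univ]; omega)
  exact (connected_iff _).mpr
    ⟨TokenGraph.preconnected_tokenGraph hG.preconnected, ⟨⟨s, (mem_powersetCard.mp hs).2⟩⟩⟩

theorem stmt0 {V : Type*} [Fintype V] [DecidableEq V] (G : SimpleGraph V) (k : ℕ)
    (hk1 : 1 ≤ k) (hk2 : k ≤ Fintype.card V - 1) (hG : G.Connected) :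
    (tokenGraph G k).Connected :=
  stmt0_general G k hk2 hG
end

section
/- Let G be a graph on n vertices with no isolated vertices and let 2 ≤ k ≤ ⌊n/2⌋. Then the independence number of T_k(G) satisfies α(T_k(G)) ≤ (1/k)·C(n, k−1)·α(G), where C(n,k−1) is the binomial coefficient. -/
/-!
Double count the pairs `(B, A)` with `A` in a maximum independent set `𝒜` of `T_k(G)` and
`B ⊆ A` a `(k-1)`-set: each `A` has `k` such subsets. Conversely, for a fixed `B` the members
of `𝒜` above `B` are the sets `B ∪ {v}`, and two of them, `B ∪ {u}` and `B ∪ {v}`, have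
symmetric difference `{u, v}`; so the vertices `v` form an independent set of `G`, and `B`
lies below at most `α(G)` members of `𝒜`.
-/

open Finset

section IndepNum

variable {W : Type*} [Fintype W] (G : SimpleGraph W)

lemma exists_indepSet_card_eq_indepNum :
    ∃ s : Finset W, IndepSet G ↑s ∧ #s = indepNum G := by
  classical
  obtain ⟨s, -, hs⟩ := exists_mem_eq_sup (univ : Finset (Finset W)) ⟨∅, mem_univ _⟩
    fun s : Finset W => if IndepSet G ↑s then #s else 0
  unfold indepNum
  by_cases h : IndepSet G ↑s
  · exact ⟨s, h, by rw [hs, if_pos h]⟩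
  · exact ⟨∅, by simp [IndepSet], by rw [hs, if_neg h, card_empty]⟩

variable {G}

lemma IndepSet.card_le_indepNum {s : Finset W} (h : IndepSet G ↑s) : #s ≤ indepNum G := by
  classical
  unfold indepNum
  simpa only [if_pos h] using
    le_sup (f := fun s : Finset W => if IndepSet G ↑s then #s else 0) (mem_univ s)

end IndepNum

lemma Finset.filter_subset_powersetCard_univ {α : Type*} [Fintype α] [DecidableEq α] (n : ℕ)
    (s : Finset α) : {t ∈ powersetCard n (univ : Finset α) | t ⊆ s} = powersetCard n s := by
  ext t
  simp only [mem_filter, mem_powersetCard, subset_univ, true_and, and_comm]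

lemma Finset.symmDiff_insert_insert_of_notMem {α : Type*} [DecidableEq α] {s : Finset α}
    {u v : α} (hu : u ∉ s) (hv : v ∉ s) (huv : u ≠ v) :
    symmDiff (insert u s) (insert v s) = {u, v} := by
  ext x
  simp only [mem_symmDiff, mem_insert, mem_singleton]
  grind

namespace tokenGraph

variable {V : Type*} [Fintype V] [DecidableEq V] {G : SimpleGraph V} {k : ℕ}

def link (𝒜 : Finset {s : Finset V // #s = k}) (B : Finset V) : Finset V :=
  {v | v ∉ B ∧ ∃ A ∈ 𝒜, A.1 = insert v B}

lemma indepSet_link {𝒜 : Finset {s : Finset V // #s = k}}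
    (h𝒜 : IndepSet (tokenGraph G k) ↑𝒜) (B : Finset V) : IndepSet G ↑(link 𝒜 B) := by
  rintro u hu v hv huv hadj
  simp only [link, coe_filter, mem_univ, true_and, Set.mem_ofPred_eq] at hu hv
  obtain ⟨huB, A₁, hA₁, hA₁u⟩ := hu
  obtain ⟨hvB, A₂, hA₂, hA₂v⟩ := hv
  have hA₁₂ : A₁ ≠ A₂ := fun h => huv <| (insert_inj huB).mp <| by rw [← hA₁u, ← hA₂v, h]
  exact h𝒜 hA₁ hA₂ hA₁₂
    ⟨u, v, hadj, by rw [hA₁u, hA₂v, symmDiff_insert_insert_of_notMem huB hvB huv]⟩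

lemma card_filter_superset_le_card_link (𝒜 : Finset {s : Finset V // #s = k}) {B : Finset V}
    (hB : #B + 1 = k) : #{A ∈ 𝒜 | B ⊆ A.1} ≤ #(link 𝒜 B) := by
  calc #{A ∈ 𝒜 | B ⊆ A.1}
      ≤ #((link 𝒜 B).image (insert · B)) := by
        refine card_le_card_of_injOn Subtype.val (fun A hA => ?_) Subtype.val_injective.injOn
        rw [coe_filter, Set.mem_ofPred_eq] at hA
        obtain ⟨v, hvB, hAv⟩ := exists_eq_insert_iff.mpr ⟨hA.2, hB.trans A.2.symm⟩
        exact mem_coe.mpr <| mem_image.mpr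
          ⟨v, mem_filter.mpr ⟨mem_univ v, hvB, A, hA.1, hAv.symm⟩, hAv⟩
    _ ≤ #(link 𝒜 B) := card_image_le

end tokenGraph

theorem stmt2_general {V : Type*} [Fintype V] [DecidableEq V] (G : SimpleGraph V) (k : ℕ) :
    k * indepNum (tokenGraph G k) ≤ (Fintype.card V).choose (k - 1) * indepNum G := by
  obtain ⟨𝒜, h𝒜, hcard⟩ := exists_indepSet_card_eq_indepNum (tokenGraph G k)
  rcases Nat.eq_zero_or_pos k with rfl | hk
  · simp
  rw [← hcard, mul_comm, ← card_univ, ← card_powersetCard]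
  refine card_mul_le_card_mul (fun A B => B ⊆ A.1) (fun A _ => ?_) (fun B hB => ?_)
  · rw [bipartiteAbove, filter_subset_powersetCard_univ, card_powersetCard, A.2,
      Nat.choose_symm hk, Nat.choose_one_right]
  · rw [mem_powersetCard] at hB
    exact (tokenGraph.card_filter_superset_le_card_link 𝒜 (by omega)).trans
      (tokenGraph.indepSet_link h𝒜 B).card_le_indepNum

theorem stmt2 {V : Type*} [Fintype V] [DecidableEq V] (G : SimpleGraph V) (k : ℕ)
    (hiso : ∀ v : V, ∃ w, G.Adj v w)
    (hk1 : 2 ≤ k) (hk2 : k ≤ Fintype.card V / 2) :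
    k * indepNum (tokenGraph G k) ≤ (Fintype.card V).choose (k - 1) * indepNum G :=
  stmt2_general G k
end

section
/- If G is a connected bipartite graph on n vertices with bipartition V(G) = V_1 ∪ V_2 satisfying |V_1| = |V_2| = α(G) = n/2, then α(T_2(G)) = n²/4. -/
/-! The independent set `{{a, b} | a ∈ V₁, b ∈ V₂}` of `T₂(G)` gives `α(T₂(G)) ≥ α(G)² = n²/4`.
Conversely, `α(G) = |V₂|` forces Hall's condition (a set `u ⊆ V₁` with fewer neighbours would
give the larger independent set `u ∪ (V₂ \ N(u))`), so `G` has a perfect matching with `k = n/2`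
edges. The 2-sets meeting two given matching edges form a 4-cycle of `T₂(G)`, which splits into
two edges; with the `k` matching edges themselves this covers `T₂(G)` by `k + 2·C(k, 2) = k²`
cliques. -/

open Finset Function

theorem Finset.symmDiff_pair_pair {V : Type*} [DecidableEq V] {a b c : V} (hb : b ≠ a)
    (hc : c ≠ a) (hbc : b ≠ c) : symmDiff ({a, b} : Finset V) {a, c} = {b, c} := by
  ext w
  simp only [mem_symmDiff, mem_insert, mem_singleton]
  grind

section IndepNum

variable {W : Type*} [Fintype W] {H : SimpleGraph W}

theorem ncard_le_indepNum {s : Set W} (h : IndepSet H s) : s.ncard ≤ indepNum H := by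
  classical
  have hs : IndepSet H ↑s.toFinset := by rwa [Set.coe_toFinset]
  rw [Set.ncard_eq_toFinset_card']
  unfold indepNum
  exact le_of_eq_of_le (if_pos hs).symm
    (le_sup (f := fun u : Finset W => if IndepSet H ↑u then #u else 0) (mem_univ _))

theorem indepNum_le_of_cliqueCover {β : Type*} (t : Finset β) (Q : β → Set W)
    (hQ : ∀ b ∈ t, H.IsClique (Q b)) (hcover : ∀ w, ∃ b ∈ t, w ∈ Q b) : indepNum H ≤ #t := by
  classical
  unfold indepNum
  refine Finset.sup_le fun s _ => ?_
  split_ifs with hs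
  · choose c hct hcQ using hcover
    refine card_le_card_of_injOn c (fun w _ => hct w) fun w hw w' hw' hcw => ?_
    by_contra hne
    exact hs hw hw' hne (hQ _ (hct w) (hcQ w) (hcw ▸ hcQ w') hne)
  · exact Nat.zero_le _

end IndepNum

section TokenGraph

variable {V : Type*} [DecidableEq V] {G : SimpleGraph V}

theorem tokenGraph_adj_of_eq_pair {A B : {s : Finset V // s.card = 2}} {a b c : V}
    (hA : A.1 = {a, b}) (hB : B.1 = {a, c}) (hbc : G.Adj b c) (hab : a ≠ b) (hac : a ≠ c) :
    (tokenGraph G 2).Adj A B :=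
  ⟨b, c, hbc, by rw [hA, hB]; exact symmDiff_pair_pair hab.symm hac.symm hbc.ne⟩

theorem ncard_mul_ncard_le_indepNum_tokenGraph_two [Fintype V] {s t : Set V}
    (h : G.IsBipartiteWith s t) : s.ncard * t.ncard ≤ indepNum (tokenGraph G 2) := by
  have hst := Set.disjoint_left.mp h.disjoint
  let f : s × t → {A : Finset V // A.card = 2} := fun p =>
    ⟨{(p.1 : V), (p.2 : V)}, card_pair (h.disjoint.ne_of_mem p.1.2 p.2.2)⟩
  have hf : Injective f := by
    rintro ⟨⟨a, ha⟩, ⟨b, hb⟩⟩ ⟨⟨a', ha'⟩, ⟨b', hb'⟩⟩ hab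
    have key := fun w => congrArg (fun A => w ∈ A.1) hab
    simp only [f, mem_insert, mem_singleton, eq_iff_iff] at key
    have := key a; have := key b; have := hst ha; have := hst ha'
    obtain ⟨rfl, rfl⟩ : a = a' ∧ b = b' := by grind
    rfl
  have hind : IndepSet (tokenGraph G 2) (Set.range f) := by
    rintro _ ⟨⟨⟨a, ha⟩, ⟨b, hb⟩⟩, rfl⟩ _ ⟨⟨⟨a', ha'⟩, ⟨b', hb'⟩⟩, rfl⟩ - ⟨u, v, huv, hsd⟩
    have key := fun w => congrArg (fun A => w ∈ A) hsd
    simp only [f, mem_symmDiff, mem_insert, mem_singleton, eq_iff_iff] at key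
    have := key a; have := key b; have := key a'; have := key b'; have := key u; have := key v
    have := hst ha; have := hst ha'; have := huv.ne
    -- `u`, `v` lie in different parts, which forces `a ≠ a'` and `b ≠ b'`;
    -- then all four of `a, a', b, b'` lie in `{u, v}`.
    rcases h.mem_of_adj huv with ⟨hu, hv⟩ | ⟨hu, hv⟩
    · have := hst hu; grind
    · have := hst hv; grind
  calc s.ncard * t.ncard = (Set.range f).ncard := by
        rw [Set.ncard_range_of_injective hf, Nat.card_prod, Nat.card_coe_set_eq,
          Nat.card_coe_set_eq]
    _ ≤ indepNum (tokenGraph G 2) := ncard_le_indepNum hind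

end TokenGraph

section Hall

variable {V : Type*} {G : SimpleGraph V} {s t : Set V}

theorem iUnion_neighborSet_subset_of_isBipartiteWith (h : G.IsBipartiteWith s t) {u : Set V}
    (hu : u ⊆ s) : ⋃ x ∈ u, G.neighborSet x ⊆ t :=
  Set.iUnion₂_subset fun _ hx => SimpleGraph.isBipartiteWith_neighborSet_subset h (hu hx)

variable [Fintype V]

theorem ncard_le_ncard_iUnion_neighborSet_of_indepNum_le (h : G.IsBipartiteWith s t)
    (hα : indepNum G ≤ t.ncard) {u : Set V} (hu : u ⊆ s) :
    u.ncard ≤ (⋃ x ∈ u, G.neighborSet x).ncard := by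
  set N := ⋃ x ∈ u, G.neighborSet x
  have hNt : N ⊆ t := iUnion_neighborSet_subset_of_isBipartiteWith h hu
  have hind : IndepSet G (u ∪ (t \ N)) := by
    rintro a ha b hb - hab
    rcases ha with ha | ha <;> rcases hb with hb | hb
    · exact (SimpleGraph.isBipartiteWith_neighborSet_disjoint h (hu ha)).notMem_of_mem_right
        (hu hb) hab
    · exact hb.2 (Set.mem_biUnion ha hab)
    · exact ha.2 (Set.mem_biUnion hb hab.symm)
    · exact (SimpleGraph.isBipartiteWith_neighborSet_disjoint' h ha.1).notMem_of_mem_right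
        hb.1 hab
  have hdisj : Disjoint u (t \ N) := h.disjoint.mono hu Set.sdiff_subset
  have hle := ncard_le_indepNum hind
  rw [Set.ncard_union_eq hdisj, Set.ncard_sdiff hNt] at hle
  have := Set.ncard_le_ncard hNt
  omega

theorem forall_ncard_le_iUnion_neighborSet (h : G.IsBipartiteWith s t) (hst : s ∪ t = Set.univ)
    (hs : indepNum G ≤ s.ncard) (ht : indepNum G ≤ t.ncard) (u : Set V) :
    u.ncard ≤ (⋃ x ∈ u, G.neighborSet x).ncard := by
  have hNs := iUnion_neighborSet_subset_of_isBipartiteWith h (u.inter_subset_right (t := s))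
  have hNt := iUnion_neighborSet_subset_of_isBipartiteWith h.symm (u.inter_subset_right (t := t))
  calc u.ncard = (u ∩ s).ncard + (u ∩ t).ncard := by
        rw [← Set.ncard_union_eq (h.disjoint.mono Set.inter_subset_right Set.inter_subset_right),
          ← Set.inter_union_distrib_left, hst, Set.inter_univ]
    _ ≤ (⋃ x ∈ u ∩ s, G.neighborSet x).ncard + (⋃ x ∈ u ∩ t, G.neighborSet x).ncard :=
        add_le_add (ncard_le_ncard_iUnion_neighborSet_of_indepNum_le h ht Set.inter_subset_right)
          (ncard_le_ncard_iUnion_neighborSet_of_indepNum_le h.symm hs Set.inter_subset_right)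
    _ = ((⋃ x ∈ u ∩ s, G.neighborSet x) ∪ ⋃ x ∈ u ∩ t, G.neighborSet x).ncard :=
        (Set.ncard_union_eq (h.disjoint.symm.mono hNs hNt)).symm
    _ ≤ (⋃ x ∈ u, G.neighborSet x).ncard := Set.ncard_le_ncard (Set.union_subset
        (Set.biUnion_subset_biUnion_left Set.inter_subset_left)
        (Set.biUnion_subset_biUnion_left Set.inter_subset_left))

end Hall

theorem SimpleGraph.Subgraph.IsPerfectMatching.exists_involutive_adj {V : Type*}
    {G : SimpleGraph V} {M : G.Subgraph} (hM : M.IsPerfectMatching) :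
    ∃ m : V → V, Involutive m ∧ ∀ v, G.Adj v (m v) := by
  choose m hm hmu using Subgraph.isPerfectMatching_iff.mp hM
  exact ⟨m, fun v => (hmu (m v) v (hm v).symm).symm, fun v => (hm v).adj_sub⟩

section Matching

variable {V : Type*} {m : V → V} {r : V → V → Prop}

theorem two_mul_card_filter_rel_involutive [Fintype V] [IsStrictTotalOrder V r] [DecidableRel r]
    (hm : Involutive m) (hfix : ∀ v, m v ≠ v) :
    2 * #{x | r x (m x)} = Fintype.card V := by
  rw [← card_univ, ← card_filter_add_card_filter_not (s := univ) (fun x => r x (m x)), two_mul]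
  congr 1
  refine card_nbij' m m (fun x hx => ?_) (fun x hx => ?_) (fun x _ => hm x) (fun x _ => hm x)
  · simp only [coe_filter, mem_univ, true_and, Set.mem_ofPred_eq, hm x] at hx ⊢
    exact asymm hx
  · simp only [coe_filter, mem_univ, true_and, Set.mem_ofPred_eq, hm x] at hx ⊢
    exact (trichotomous_of r x (m x)).resolve_left hx |>.resolve_left (hfix x).symm

variable [DecidableEq V] {G : SimpleGraph V}

/-- For representatives `x`, `y` of two matched pairs, the 2-sets meeting both pairs form the
4-cycle `{x, y}, {x, m y}, {m x, m y}, {m x, y}` of the token graph; the order `r` picks one of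
its two perfect matchings, and `matchingCell m r x y` is the edge through `{x, m y}` (the single
vertex `{x, m x}` when `x = y`). -/
def matchingCell (m : V → V) (r : V → V → Prop) (x y : V) : Set (Finset V) :=
  {s | s = {x, m y} ∨ r x y ∧ s = {x, y} ∨ r y x ∧ s = {m x, m y}}

theorem isClique_matchingCell [IsStrictOrder V r] (hm : Involutive m)
    (hadj : ∀ v, G.Adj v (m v)) {x y : V} (hx : r x (m x)) (hy : r y (m y)) :
    (tokenGraph G 2).IsClique (Subtype.val ⁻¹' matchingCell m r x y) := by
  have hxy : x ≠ m y := by rintro rfl; rw [hm y] at hx; exact asymm hx hy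
  have h₁ : ∀ {A B : {s : Finset V // s.card = 2}}, A.1 = {x, m y} → r x y → B.1 = {x, y} →
      (tokenGraph G 2).Adj A B := fun hA hlt hB =>
    tokenGraph_adj_of_eq_pair hA hB (hadj y).symm hxy (ne_of_irrefl hlt)
  have h₂ : ∀ {A B : {s : Finset V // s.card = 2}}, A.1 = {x, m y} → r y x →
      B.1 = {m x, m y} → (tokenGraph G 2).Adj A B := fun hA hlt hB =>
    tokenGraph_adj_of_eq_pair (hA.trans (pair_comm _ _)) (hB.trans (pair_comm _ _)) (hadj x)
      hxy.symm (hm.injective.ne (ne_of_irrefl hlt))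
  rintro A hA B hB hAB
  rcases hA with hA | ⟨hlt, hA⟩ | ⟨hlt, hA⟩ <;> rcases hB with hB | ⟨hlt', hB⟩ | ⟨hlt', hB⟩
  all_goals first
    | exact absurd (Subtype.ext (hA.trans hB.symm)) hAB
    | exact absurd hlt' (asymm hlt)
    | skip
  · exact h₁ hA hlt' hB
  · exact h₂ hA hlt' hB
  · exact (h₁ hB hlt hA).symm
  · exact (h₂ hB hlt hA).symm

theorem exists_mem_matchingCell [IsStrictTotalOrder V r] (hm : Involutive m)
    (hfix : ∀ v, m v ≠ v) {s : Finset V} (hs : s.card = 2) :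
    ∃ x y, r x (m x) ∧ r y (m y) ∧ s ∈ matchingCell m r x y := by
  obtain ⟨u, v, huv, rfl⟩ := card_eq_two.mp hs
  have side : ∀ w, r w (m w) ∨ r (m w) (m (m w)) := fun w => by
    rw [hm w]
    exact (trichotomous_of r w (m w)).imp_right (Or.resolve_left · (hfix w).symm)
  rcases side u with hu | hu <;> rcases side v with hv | hv
  · rcases trichotomous_of r u v with h | rfl | h
    · exact ⟨u, v, hu, hv, Or.inr (Or.inl ⟨h, rfl⟩)⟩
    · exact absurd rfl huv
    · exact ⟨v, u, hv, hu, Or.inr (Or.inl ⟨h, pair_comm _ _⟩)⟩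
  · exact ⟨u, m v, hu, hv, Or.inl (by rw [hm v])⟩
  · exact ⟨v, m u, hv, hu, Or.inl (by rw [hm u, pair_comm])⟩
  · rcases trichotomous_of r (m u) (m v) with h | h | h
    · exact ⟨m v, m u, hv, hu, Or.inr (Or.inr ⟨h, by rw [hm, hm, pair_comm]⟩)⟩
    · exact absurd (hm.injective h) huv
    · exact ⟨m u, m v, hu, hv, Or.inr (Or.inr ⟨h, by rw [hm, hm]⟩)⟩

theorem four_mul_indepNum_tokenGraph_two_le [Fintype V] {M : G.Subgraph}
    (hM : M.IsPerfectMatching) : 4 * indepNum (tokenGraph G 2) ≤ Fintype.card V ^ 2 := by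
  classical
  obtain ⟨m, hm, hadj⟩ := hM.exists_involutive_adj
  have hfix : ∀ v, m v ≠ v := fun v => (hadj v).ne.symm
  let r : V → V → Prop := WellOrderingRel
  let S : Finset V := {x | r x (m x)}
  have hcover : indepNum (tokenGraph G 2) ≤ #(S ×ˢ S) :=
    indepNum_le_of_cliqueCover (S ×ˢ S) (fun p => Subtype.val ⁻¹' matchingCell m r p.1 p.2)
      (fun p hp => by
        simp only [S, mem_product, mem_filter_univ] at hp
        exact isClique_matchingCell (r := r) hm hadj hp.1 hp.2)
      (fun A => by
        obtain ⟨x, y, hx, hy, hA⟩ := exists_mem_matchingCell (r := r) hm hfix A.2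
        exact ⟨(x, y), by simp [S, hx, hy], hA⟩)
  have hS : 2 * #S = Fintype.card V := two_mul_card_filter_rel_involutive (r := r) hm hfix
  rw [card_product] at hcover
  rw [← hS]
  nlinarith

end Matching

theorem stmt5_general {V : Type*} [Fintype V] [DecidableEq V] (G : SimpleGraph V)
    (V₁ V₂ : Set V)
    (hunion : V₁ ∪ V₂ = Set.univ) (hdisj : V₁ ∩ V₂ = ∅)
    (hbip : ∀ a b, G.Adj a b → (a ∈ V₁ ∧ b ∈ V₂) ∨ (a ∈ V₂ ∧ b ∈ V₁))
    (hc1 : V₁.ncard = indepNum G) (hc2 : V₂.ncard = indepNum G)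
    (hn : 2 * indepNum G = Fintype.card V) :
    4 * indepNum (tokenGraph G 2) = (Fintype.card V) ^ 2 := by
  classical
  have hG : G.IsBipartiteWith V₁ V₂ := ⟨Set.disjoint_iff_inter_eq_empty.mpr hdisj, hbip⟩
  obtain ⟨M, hM⟩ := SimpleGraph.exists_isPerfectMatching_of_forall_ncard_le hG
    (forall_ncard_le_iUnion_neighborSet hG hunion hc1.ge hc2.ge)
  have hupper := four_mul_indepNum_tokenGraph_two_le hM
  have hlower := ncard_mul_ncard_le_indepNum_tokenGraph_two hG
  rw [hc1, hc2] at hlower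
  rw [← hn] at hupper ⊢
  nlinarith

theorem stmt5 {V : Type*} [Fintype V] [DecidableEq V] (G : SimpleGraph V)
    (V₁ V₂ : Set V) (hG : G.Connected)
    (hunion : V₁ ∪ V₂ = Set.univ) (hdisj : V₁ ∩ V₂ = ∅)
    (hbip : ∀ a b, G.Adj a b → (a ∈ V₁ ∧ b ∈ V₂) ∨ (a ∈ V₂ ∧ b ∈ V₁))
    (hc1 : V₁.ncard = indepNum G) (hc2 : V₂.ncard = indepNum G)
    (hn : 2 * indepNum G = Fintype.card V) :
    4 * indepNum (tokenGraph G 2) = (Fintype.card V) ^ 2 :=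
  stmt5_general G V₁ V₂ hunion hdisj hbip hc1 hc2 hn
end

section
/- Let G be a graph containing pairwise disjoint independent sets V_1, V_2, …, V_k with k even. Then V_1V_2 ∪ V_3V_4 ∪ ⋯ ∪ V_{k−1}V_k is an independent set of T_2(G), where V_iV_j = { {x,y} : x ∈ V_i, y ∈ V_j, x ≠ y }. -/
/-! Two adjacent vertices of `T₂(G)` are pairs `{u, c}` and `{v, c}` with `u ~ v`. For pairs
`{x, y}` with `x ∈ V_{2i}` and `y ∈ V_{2i+1}`, disjointness of the blocks forces the shared
vertex `c` into the same position of both pairs (an even block is never an odd one) and then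
`i = j`; so `u` and `v` lie in one block, which is independent. -/

open Finset

theorem Finset.pair_eq_pair_iff {α : Type*} [DecidableEq α] {x y z w : α} :
    ({x, y} : Finset α) = {z, w} ↔ x = z ∧ y = w ∨ x = w ∧ y = z := by
  rw [← coe_inj, coe_pair, coe_pair, Set.pair_eq_pair_iff]

theorem tokenGraph_two_adj_exists {V : Type*} [DecidableEq V] {G : SimpleGraph V}
    {A B : {s : Finset V // s.card = 2}} (h : (tokenGraph G 2).Adj A B) :
    ∃ u v c, G.Adj u v ∧ A.1 = {u, c} ∧ B.1 = {v, c} := by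
  obtain ⟨A, hA⟩ := A
  obtain ⟨B, hB⟩ := B
  obtain ⟨a, b, hab, hsd⟩ := h
  have hsum : #(A \ B) + #(B \ A) = 2 := by
    rw [← card_union_of_disjoint disjoint_sdiff_sdiff, ← Finset.symmDiff_def, hsd,
      card_pair hab.ne]
  have hcomm : #(A \ B) = #(B \ A) := card_sdiff_comm (hA.trans hB.symm)
  have hinter := card_sdiff_add_card_inter A B
  obtain ⟨u, hu⟩ := card_eq_one.1 (by omega : #(A \ B) = 1)
  obtain ⟨v, hv⟩ := card_eq_one.1 (by omega : #(B \ A) = 1)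
  obtain ⟨c, hc⟩ := card_eq_one.1 (by omega : #(A ∩ B) = 1)
  refine ⟨u, v, c, ?_, ?_, ?_⟩
  · have huv : ({u, v} : Finset V) = {a, b} := by
      rw [← hsd, Finset.symmDiff_def, hu, hv]; rfl
    rcases pair_eq_pair_iff.1 huv with ⟨rfl, rfl⟩ | ⟨rfl, rfl⟩
    exacts [hab, hab.symm]
  · show A = {u, c}
    rw [← sdiff_union_inter A B, hu, hc]; rfl
  · show B = {v, c}
    rw [← sdiff_union_inter B A, hv, inter_comm, hc]; rfl

theorem eq_of_mem_of_pairwise_disjoint {V : Type*} {k : ℕ} {Vs : ℕ → Set V}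
    (hdisj : ∀ i < k, ∀ j < k, i ≠ j → Disjoint (Vs i) (Vs j)) {p q : ℕ} (hp : p < k)
    (hq : q < k) {w : V} (hwp : w ∈ Vs p) (hwq : w ∈ Vs q) : p = q := by
  by_contra hpq
  exact Set.disjoint_left.1 (hdisj p hp q hq hpq) hwp hwq

theorem stmt7_general {V : Type*} [DecidableEq V] (G : SimpleGraph V) (k : ℕ)
    (Vs : ℕ → Set V) (hind : ∀ i < k, IndepSet G (Vs i))
    (hdisj : ∀ i < k, ∀ j < k, i ≠ j → Disjoint (Vs i) (Vs j)) :
    IndepSet (tokenGraph G 2)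
      {A : {s : Finset V // s.card = 2} | ∃ i, 2 * i + 1 < k ∧
        ∃ x ∈ Vs (2 * i), ∃ y ∈ Vs (2 * i + 1), x ≠ y ∧ A.1 = {x, y}} := by
  rintro A ⟨i, hi, x, hx, y, hy, -, hA⟩ B ⟨j, hj, x', hx', y', hy', -, hB⟩ - hAB
  obtain ⟨u, v, c, huv, hAuc, hBvc⟩ := tokenGraph_two_adj_exists hAB
  rcases pair_eq_pair_iff.1 (hA.symm.trans hAuc) with ⟨rfl, rfl⟩ | ⟨rfl, rfl⟩ <;>
    rcases pair_eq_pair_iff.1 (hB.symm.trans hBvc) with ⟨rfl, rfl⟩ | ⟨rfl, rfl⟩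
  · obtain rfl : i = j := by have := eq_of_mem_of_pairwise_disjoint hdisj hi hj hy hy'; omega
    exact hind (2 * i) (by omega) hx hx' huv.ne huv
  · have := eq_of_mem_of_pairwise_disjoint hdisj hi (by omega) hy hx'; omega
  · have := eq_of_mem_of_pairwise_disjoint hdisj (by omega) hj hx hy'; omega
  · obtain rfl : i = j := by
      have := eq_of_mem_of_pairwise_disjoint hdisj (by omega) (by omega) hx hx'; omega
    exact hind (2 * i + 1) hi hy hy' huv.ne huv

theorem stmt7 {V : Type*} [DecidableEq V] (G : SimpleGraph V) (k : ℕ) (hk : Even k)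
    (Vs : ℕ → Set V) (hind : ∀ i < k, IndepSet G (Vs i))
    (hdisj : ∀ i < k, ∀ j < k, i ≠ j → Disjoint (Vs i) (Vs j)) :
    IndepSet (tokenGraph G 2)
      {A : {s : Finset V // s.card = 2} | ∃ i, 2 * i + 1 < k ∧
        ∃ x ∈ Vs (2 * i), ∃ y ∈ Vs (2 * i + 1), x ≠ y ∧ A.1 = {x, y}} :=
  stmt7_general G k Vs hind hdisj
end

section
/- Let G be a connected bipartite graph with bipartition V(G) = L ∪ R, and let k ≥ 1. Then T_k(G) is bipartite with bipartition given by { A ∈ V(T_k(G)) : |A ∩ R| is even } and { A ∈ V(T_k(G)) : |A ∩ R| is odd }. -/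
namespace Finset

variable {α : Type*} [DecidableEq α]

open scoped symmDiff

theorem card_symmDiff_add_two_mul_card_inter (s t : Finset α) :
    #(s ∆ t) + 2 * #(s ∩ t) = #s + #t := by
  rw [Finset.symmDiff_def, card_union_of_disjoint (disjoint_sdiff.mono_left sdiff_subset),
    ← card_sdiff_add_card_inter s t, ← card_sdiff_add_card_inter t s, inter_comm t s]
  ring

theorem even_card_iff_not_even_card_of_odd_card_symmDiff {s t : Finset α}
    (h : Odd #(s ∆ t)) : Even #s ↔ ¬Even #t := by
  have hcard := card_symmDiff_add_two_mul_card_inter s t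
  obtain ⟨m, hm⟩ := h
  rw [Nat.even_iff, Nat.even_iff]
  omega

theorem card_pair_inter_eq_one {a b : α} {s : Finset α} (ha : a ∉ s) (hb : b ∈ s) :
    #({a, b} ∩ s) = 1 := by
  rw [insert_inter_of_notMem ha, singleton_inter_of_mem hb, card_singleton]

theorem card_pair_inter_eq_one_of_crossing {a b : α} {L R : Finset α} (hLR : Disjoint L R)
    (hab : (a ∈ L ∧ b ∈ R) ∨ (a ∈ R ∧ b ∈ L)) : #({a, b} ∩ R) = 1 := by
  rcases hab with ⟨ha, hb⟩ | ⟨ha, hb⟩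
  · exact card_pair_inter_eq_one (disjoint_left.mp hLR ha) hb
  · rw [pair_comm]
    exact card_pair_inter_eq_one (disjoint_left.mp hLR hb) ha

end Finset

theorem stmt10_general {V : Type*} [DecidableEq V] (G : SimpleGraph V) (k : ℕ)
    (L R : Finset V) (hdisj : Disjoint L R)
    (hbip : ∀ a b, G.Adj a b → (a ∈ L ∧ b ∈ R) ∨ (a ∈ R ∧ b ∈ L))
    (A B : {s : Finset V // s.card = k}) (hAB : (tokenGraph G k).Adj A B) :
    Even ((A.1 ∩ R).card) ↔ ¬ Even ((B.1 ∩ R).card) := by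
  obtain ⟨a, b, hab, hsymmDiff⟩ := hAB
  apply Finset.even_card_iff_not_even_card_of_odd_card_symmDiff
  rw [← Finset.inf_eq_inter, ← Finset.inf_eq_inter, ← inf_symmDiff_distrib_right, hsymmDiff,
    Finset.inf_eq_inter, Finset.card_pair_inter_eq_one_of_crossing hdisj (hbip a b hab)]
  exact odd_one

theorem stmt10 {V : Type*} [Fintype V] [DecidableEq V] (G : SimpleGraph V) (k : ℕ)
    (hk : 1 ≤ k) (L R : Finset V) (hG : G.Connected)
    (hunion : L ∪ R = Finset.univ) (hdisj : Disjoint L R)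
    (hbip : ∀ a b, G.Adj a b → (a ∈ L ∧ b ∈ R) ∨ (a ∈ R ∧ b ∈ L))
    (A B : {s : Finset V // s.card = k}) (hAB : (tokenGraph G k).Adj A B) :
    Even ((A.1 ∩ R).card) ↔ ¬ Even ((B.1 ∩ R).card) :=
  stmt10_general G k L R hdisj hbip A B hAB
end

section
/- Let G be a connected bipartite graph with bipartition V(G) = L ∪ R, with |L| ≥ k ≥ 2. If A is a vertex of T_k(G) with A ⊆ L (i.e., |A ∩ L| = k), then A has degree at least 2 in T_k(G). -/
/-!
Every token `a ∈ A` has a neighbour `b` in `G` (connectivity, and `G` has at least two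
vertices), and `b ∈ R` lies outside `A`. Sliding the token from `a` to `b` gives a neighbour
`(A \ {a}) ∪ {b}` of `A` in `T_k(G)`, and different `a` give different neighbours since `a`
is the only element of `A` they miss. Hence `A` has degree at least `k ≥ 2`.
-/

lemma Finset.symmDiff_insert_erase {V : Type*} [DecidableEq V] {s : Finset V} {a b : V}
    (ha : a ∈ s) (hb : b ∉ s) : symmDiff s (insert b (s.erase a)) = {a, b} := by
  ext x
  by_cases hxa : x = a
  · subst hxa
    simp [Finset.mem_symmDiff, ha, ne_of_mem_of_not_mem ha hb]
  · by_cases hxb : x = b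
    · subst hxb
      simp [Finset.mem_symmDiff, hb]
    · simp [Finset.mem_symmDiff, hxa, hxb]

namespace tokenGraph

variable {V : Type*} [DecidableEq V] {G : SimpleGraph V} {k : ℕ}

lemma exists_adj_insert_erase (A : {s : Finset V // s.card = k}) {a b : V}
    (ha : a ∈ A.1) (hb : b ∉ A.1) (hab : G.Adj a b) :
    ∃ B, (tokenGraph G k).Adj A B ∧ B.1 = insert b (A.1.erase a) := by
  have hcard : (insert b (A.1.erase a)).card = k := by
    rw [Finset.card_insert_of_notMem fun h => hb (Finset.mem_of_mem_erase h),
      Finset.card_erase_add_one ha, A.2]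
  exact ⟨⟨_, hcard⟩, ⟨a, b, hab, Finset.symmDiff_insert_erase ha hb⟩, rfl⟩

lemma le_ncard_neighborSet [Fintype V] (A : {s : Finset V // s.card = k})
    (h : ∀ a ∈ A.1, ∃ b ∉ A.1, G.Adj a b) :
    k ≤ ((tokenGraph G k).neighborSet A).ncard := by
  have hmove : ∀ a, ∃ B, a ∈ A.1 →
      (tokenGraph G k).Adj A B ∧ a ∉ B.1 ∧ A.1.erase a ⊆ B.1 := by
    intro a
    by_cases ha : a ∈ A.1
    · obtain ⟨b, hb, hab⟩ := h a ha
      obtain ⟨B, hAB, hB⟩ := exists_adj_insert_erase A ha hb hab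
      refine ⟨B, fun _ => ⟨hAB, ?_, hB ▸ Finset.subset_insert _ _⟩⟩
      simp [hB, ne_of_mem_of_not_mem ha hb]
    · exact ⟨A, fun h => absurd h ha⟩
  choose f hf using hmove
  have hinj : Set.InjOn f A.1 := by
    intro a₁ ha₁ a₂ ha₂ heq
    by_contra hne
    exact (hf a₁ ha₁).2.1 (heq ▸ (hf a₂ ha₂).2.2 (Finset.mem_erase.mpr ⟨hne, ha₁⟩))
  calc k = (A.1 : Set V).ncard := by rw [Set.ncard_coe_finset, A.2]
    _ ≤ _ := Set.ncard_le_ncard_of_injOn f (fun a ha => (hf a ha).1) hinj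

end tokenGraph

theorem stmt12_general {V : Type*} [Fintype V] [DecidableEq V] (G : SimpleGraph V) (k : ℕ)
    (L R : Finset V) (hG : G.Connected)
    (hdisj : Disjoint L R)
    (hbip : ∀ a b, G.Adj a b → (a ∈ L ∧ b ∈ R) ∨ (a ∈ R ∧ b ∈ L))
    (hk : 2 ≤ k)
    (A : {s : Finset V // s.card = k}) (hA : A.1 ⊆ L) :
    2 ≤ ((tokenGraph G k).neighborSet A).ncard := by
  obtain ⟨a₁, -, a₂, -, hne⟩ := Finset.one_lt_card.mp (by omega : 1 < A.1.card)
  have : Nontrivial V := ⟨a₁, a₂, hne⟩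
  have hexit : ∀ a ∈ A.1, ∃ b ∉ A.1, G.Adj a b := by
    intro a ha
    obtain ⟨b, hab⟩ := hG.preconnected.exists_adj_of_nontrivial a
    have hbR : b ∈ R := by
      rcases hbip a b hab with ⟨-, hb⟩ | ⟨haR, -⟩
      · exact hb
      · exact absurd haR (Finset.disjoint_left.mp hdisj (hA ha))
    exact ⟨b, fun hb => Finset.disjoint_left.mp hdisj (hA hb) hbR, hab⟩
  exact hk.trans (tokenGraph.le_ncard_neighborSet A hexit)

theorem stmt12 {V : Type*} [Fintype V] [DecidableEq V] (G : SimpleGraph V) (k : ℕ)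
    (L R : Finset V) (hG : G.Connected)
    (hunion : L ∪ R = Finset.univ) (hdisj : Disjoint L R)
    (hbip : ∀ a b, G.Adj a b → (a ∈ L ∧ b ∈ R) ∨ (a ∈ R ∧ b ∈ L))
    (hk : 2 ≤ k) (hL : k ≤ L.card)
    (A : {s : Finset V // s.card = k}) (hA : A.1 ⊆ L) :
    2 ≤ ((tokenGraph G k).neighborSet A).ncard :=
  stmt12_general G k L R hG hdisj hbip hk A hA
end

section
/- Let G be a connected bipartite graph with bipartition V(G) = L ∪ R, |L| ≥ k ≥ 2 and |R| ≥ 1. If A_1 and A_2 are distinct vertices of T_k(G) with A_1 ⊆ L and A_2 ⊆ L, then A_1 is not an isolated vertex of the graph T_k(G) ∖ N[A_2] obtained by deleting the closed neighbourhood of A_2. -/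
/-!
Since `L` is independent, no two `k`-subsets of `L` are adjacent in `T_k(G)`, so `A₁ ∉ N[A₂]`.
For the neighbour, move a token of `A₁` from some `a` along an edge `a r` of `G` (`r ∈ R` exists
since `G` is connected), giving `B`. Adjacent `k`-sets differ in exactly one element each way, so
`B ∉ N[A₂]` once `|A₂ \ B| ≥ 2`: take `a ∈ A₁ ∩ A₂` when possible, so that `B` misses `a` and a
point of `A₂ \ A₁`; otherwise `B` misses all of `A₂`, and `k ≥ 2`.
-/

lemma Finset.exists_mem_two_le_card_sdiff_erase {α : Type*} [DecidableEq α] {X Y : Finset α}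
    (hcard : X.card = Y.card) (hne : X ≠ Y) (hY : 2 ≤ Y.card) :
    ∃ a ∈ X, 2 ≤ (Y \ X.erase a).card := by
  by_cases hXY : (X ∩ Y).Nonempty
  · obtain ⟨a, ha⟩ := hXY
    obtain ⟨haX, haY⟩ := Finset.mem_inter.1 ha
    have hYX : (Y \ X).Nonempty := Finset.sdiff_nonempty.2 fun hsub =>
      hne (Finset.eq_of_subset_of_card_le hsub hcard.le).symm
    refine ⟨a, haX, ?_⟩
    calc 2 ≤ (insert a (Y \ X)).card := by
          rw [Finset.card_insert_of_notMem (by simp [haX])]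
          have := hYX.card_pos
          omega
      _ ≤ (Y \ X.erase a).card := Finset.card_le_card fun u => by
          simp only [Finset.mem_insert, Finset.mem_sdiff, Finset.mem_erase]
          rintro (rfl | ⟨huY, huX⟩)
          exacts [⟨haY, fun h => h.1 rfl⟩, ⟨huY, fun h => huX h.2⟩]
  · obtain ⟨a, ha⟩ : X.Nonempty := Finset.card_pos.1 (by omega)
    have hdisj : Disjoint Y (X.erase a) :=
      (Finset.disjoint_iff_inter_eq_empty.2 (Finset.not_nonempty_iff_eq_empty.1 hXY)).symm
        |>.mono_right (Finset.erase_subset a X)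
    exact ⟨a, ha, by rwa [Finset.sdiff_eq_self_of_disjoint hdisj]⟩

namespace tokenGraph

variable {V : Type*} [DecidableEq V] {G : SimpleGraph V} {k : ℕ}

lemma not_adj_of_isIndepSet {S : Set V} (hS : G.IsIndepSet S)
    {X Y : {s : Finset V // s.card = k}} (hX : ↑X.1 ⊆ S) (hY : ↑Y.1 ⊆ S) :
    ¬ (tokenGraph G k).Adj X Y := by
  rintro ⟨a, b, hab, hsd⟩
  have hmem : ∀ u ∈ ({a, b} : Finset V), u ∈ S := fun u hu => by
    rw [← hsd] at hu
    rcases Finset.mem_union.1 (Finset.symmDiff_subset_union hu) with h | h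
    exacts [hX h, hY h]
  exact hS (hmem a (by simp)) (hmem b (by simp)) hab.ne hab

lemma card_sdiff_eq_one_of_adj {X Y : {s : Finset V // s.card = k}}
    (h : (tokenGraph G k).Adj X Y) : (X.1 \ Y.1).card = 1 := by
  obtain ⟨a, b, hab, hsd⟩ := h
  have hsd_card : (symmDiff X.1 Y.1).card = 2 := by rw [hsd, Finset.card_pair hab.ne]
  rw [symmDiff_def, Finset.sup_eq_union,
    Finset.card_union_of_disjoint disjoint_sdiff_sdiff,
    Finset.card_sdiff_comm (X.2.trans Y.2.symm)] at hsd_card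
  rw [Finset.card_sdiff_comm (X.2.trans Y.2.symm)]
  omega

lemma notMem_closedNbhd_of_two_le_card_sdiff {X Y : {s : Finset V // s.card = k}}
    (h : 2 ≤ (Y.1 \ X.1).card) : X ∉ insert Y ((tokenGraph G k).neighborSet Y) := by
  rintro (rfl | hadj)
  · simp at h
  · have := card_sdiff_eq_one_of_adj hadj
    omega

lemma adj_insert_erase {A : {s : Finset V // s.card = k}} {a r : V} (ha : a ∈ A.1)
    (hr : r ∉ A.1) (har : G.Adj a r) :
    (tokenGraph G k).Adj A
      ⟨insert r (A.1.erase a), by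
        rw [Finset.card_insert_of_notMem (fun h => hr (Finset.mem_of_mem_erase h)),
          Finset.card_erase_add_one ha, A.2]⟩ := by
  refine ⟨a, r, har, ?_⟩
  ext u
  simp only [Finset.mem_symmDiff, Finset.mem_insert, Finset.mem_erase, Finset.mem_singleton]
  grind

end tokenGraph

theorem stmt13_general {V : Type*} [DecidableEq V] (G : SimpleGraph V) (k : ℕ)
    (L R : Finset V) (hG : G.Connected)
    (hdisj : Disjoint L R)
    (hbip : ∀ a b, G.Adj a b → (a ∈ L ∧ b ∈ R) ∨ (a ∈ R ∧ b ∈ L))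
    (hk : 2 ≤ k) (hR : R.Nonempty)
    (A₁ A₂ : {s : Finset V // s.card = k}) (hne : A₁ ≠ A₂)
    (hA₁ : A₁.1 ⊆ L) (hA₂ : A₂.1 ⊆ L) :
    A₁ ∉ insert A₂ ((tokenGraph G k).neighborSet A₂) ∧
      ∃ B, B ∉ insert A₂ ((tokenGraph G k).neighborSet A₂) ∧
        (tokenGraph G k).Adj A₁ B := by
  have hL : G.IsIndepSet L := fun x hx y hy _ hxy => by
    rcases hbip x y hxy with ⟨-, h⟩ | ⟨h, -⟩
    exacts [Finset.disjoint_left.1 hdisj hy h, Finset.disjoint_left.1 hdisj hx h]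
  obtain ⟨a, haA₁, hsdiff⟩ := Finset.exists_mem_two_le_card_sdiff_erase
    (A₁.2.trans A₂.2.symm) (Subtype.coe_injective.ne hne) (hk.trans A₂.2.ge)
  obtain ⟨v, hv⟩ := hR
  have : Nontrivial V :=
    nontrivial_of_ne a v fun h => Finset.disjoint_left.1 hdisj (hA₁ haA₁) (h ▸ hv)
  obtain ⟨r, har⟩ := hG.preconnected.exists_adj_of_nontrivial a
  have hrL : r ∉ L := fun hr => hL (hA₁ haA₁) hr har.ne har
  refine ⟨?_, _, ?_, tokenGraph.adj_insert_erase haA₁ (fun h => hrL (hA₁ h)) har⟩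
  · rintro (h | h)
    exacts [hne h, tokenGraph.not_adj_of_isIndepSet hL (Finset.coe_subset.2 hA₂)
      (Finset.coe_subset.2 hA₁) h]
  · apply tokenGraph.notMem_closedNbhd_of_two_le_card_sdiff
    rwa [Finset.sdiff_insert_of_notMem (fun h => hrL (hA₂ h))]

theorem stmt13 {V : Type*} [Fintype V] [DecidableEq V] (G : SimpleGraph V) (k : ℕ)
    (L R : Finset V) (hG : G.Connected)
    (hunion : L ∪ R = Finset.univ) (hdisj : Disjoint L R)
    (hbip : ∀ a b, G.Adj a b → (a ∈ L ∧ b ∈ R) ∨ (a ∈ R ∧ b ∈ L))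
    (hk : 2 ≤ k) (hL : k ≤ L.card) (hR : R.Nonempty)
    (A₁ A₂ : {s : Finset V // s.card = k}) (hne : A₁ ≠ A₂)
    (hA₁ : A₁.1 ⊆ L) (hA₂ : A₂.1 ⊆ L) :
    A₁ ∉ insert A₂ ((tokenGraph G k).neighborSet A₂) ∧
      ∃ B, B ∉ insert A₂ ((tokenGraph G k).neighborSet A₂) ∧
        (tokenGraph G k).Adj A₁ B :=
  stmt13_general G k L R hG hdisj hbip hk hR A₁ A₂ hne hA₁ hA₂
end
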